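/- Assume the setting and hypothesis (A). Then minimal domains exist, and every s-invariant domain contains a minimal one: for every s-invariant domain D there exists a minimal domain ℳ with ℳ ⪯ D. -/

import Mathlib

/-!
Minimal domains come from Zorn's lemma for `⪯`, so the point is that every chain of s-invariant
domains has a lower bound. By hypothesis (A) every piece of an s-invariant domain contains a
`ξ₀`-ball, so by compactness the periods `r` are bounded; along a chain they are totally ordered
by divisibility, hence all divide the largest one. A point `z` common to the closures of all the
carriers (nonempty by compactness) is moved by `K + 1` unperturbed steps to a point whose
`ξ₀/2`-ball lies, again by (A), inside a single piece of every member of the chain. The perturbed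
orbit of this ball, sorted by the number of steps modulo the largest period, is an s-invariant
domain below the whole chain.
-/

open MeasureTheory Metric Set Filter Topology

noncomputable section

/-- The parameter space `T`: the closed `ε`-ball around `a` in `ℝⁿ`. -/
abbrev PSpace (n : ℕ) (a : EuclideanSpace ℝ (Fin n)) (ε : ℝ) : Type _ :=
  ↥(Metric.closedBall a ε)

/-- Perturbed iterates: `pIter f k z t = f_{t_k} ∘ ⋯ ∘ f_{t_1} (z)`
(the sequence `t` is indexed from `0` here). -/
def pIter {M T : Type*} (f : M → T → M) : ℕ → M → (ℕ → T) → M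
  | 0, z, _ => z
  | k + 1, z, t => f (pIter f k z t) (t k)

/-- An s-invariant domain for the randomly perturbed system: a finite tuple of
nonempty open sets with pairwise disjoint closures, permuted cyclically by all
perturbed iterates. -/
structure SInvDomain {M T : Type*} [TopologicalSpace M] (f : M → T → M) where
  r : ℕ
  r_pos : 0 < r
  U : Fin r → Set M
  isOpen : ∀ i, IsOpen (U i)
  nonempty : ∀ i, (U i).Nonempty
  separated : ∀ i j : Fin r, i ≠ j → closure (U i) ∩ closure (U j) = ∅
  invariant : ∀ k : ℕ, 1 ≤ k → ∀ i : Fin r, ∀ z ∈ U i, ∀ t : ℕ → T,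
    pIter f k z t ∈ U ⟨((i : ℕ) + k) % r, Nat.mod_lt _ r_pos⟩

/-- The union `⋃D` of the open sets forming an s-invariant domain. -/
def SInvDomain.carrier {M T : Type*} [TopologicalSpace M] {f : M → T → M}
    (D : SInvDomain f) : Set M := ⋃ i, D.U i

/-- The partial order `D ⪯ D'` on s-invariant domains. -/
def DomLE {M T : Type*} [TopologicalSpace M] {f : M → T → M}
    (D D' : SInvDomain f) : Prop :=
  ∃ i i' : ℕ, ∀ k : ℕ, 1 ≤ k →
    D.U ⟨(i + k) % D.r, Nat.mod_lt _ D.r_pos⟩ ⊆ D'.U ⟨(i' + k) % D'.r, Nat.mod_lt _ D'.r_pos⟩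

/-- Two s-invariant domains coincide up to cyclic shift. -/
def CyclicEq {M T : Type*} [TopologicalSpace M] {f : M → T → M}
    (D D' : SInvDomain f) : Prop :=
  ∃ i i' : ℕ, ∀ k : ℕ, 1 ≤ k →
    D.U ⟨(i + k) % D.r, Nat.mod_lt _ D.r_pos⟩ = D'.U ⟨(i' + k) % D'.r, Nat.mod_lt _ D'.r_pos⟩

/-- A minimal invariant domain. -/
def MinimalDom {M T : Type*} [TopologicalSpace M] {f : M → T → M}
    (D : SInvDomain f) : Prop :=
  ∀ D' : SInvDomain f, DomLE D' D → CyclicEq D' D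

/-- A c-invariant (completely invariant) set. -/
def CInvariant {M T : Type*} (f : M → T → M) (C : Set M) : Prop :=
  ∀ x ∈ C, ∀ t : ℕ → T, ∀ k : ℕ, 1 ≤ k → pIter f k x t ∈ C

/-- The ω-limit of a point under a fixed perturbation vector. -/
def omegaPt {M T : Type*} [TopologicalSpace M] (f : M → T → M) (z : M) (t : ℕ → T) : Set M :=
  {w | ∃ nseq : ℕ → ℕ, StrictMono nseq ∧
    Tendsto (fun j => pIter f (nseq j) z t) atTop (𝓝 w)}

/-- The ω-limit of a set under a fixed perturbation vector. -/
def omegaSet {M T : Type*} [TopologicalSpace M] (f : M → T → M) (U : Set M) (t : ℕ → T) :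
    Set M :=
  {w | ∃ (u : ℕ → M) (nseq : ℕ → ℕ), (∀ j, u j ∈ U) ∧ StrictMono nseq ∧
    Tendsto (fun j => pIter f (nseq j) (u j) t) atTop (𝓝 w)}

/-- The ω-limit of a set under all perturbation vectors. -/
def omegaSetAll {M T : Type*} [TopologicalSpace M] (f : M → T → M) (U : Set M) : Set M :=
  {w | ∃ (u : ℕ → M) (ts : ℕ → ℕ → T) (nseq : ℕ → ℕ), (∀ j, u j ∈ U) ∧ StrictMono nseq ∧
    Tendsto (fun j => pIter f (nseq j) (u j) (ts j)) atTop (𝓝 w)}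

/-- A stationary probability measure for the perturbed system. -/
def Stationary {M T : Type*} [TopologicalSpace M] [MeasurableSpace M] [MeasurableSpace T]
    (f : M → T → M) (ν : Measure T) (μ : Measure M) : Prop :=
  ∀ φ : C(M, ℝ), ∫ z, (∫ t, φ (f z t) ∂ν) ∂μ = ∫ z, φ z ∂μ

/-- The skew product map `S(z,t) = (f_{t₁}(z), σ t)`. -/
def skewProd {M T : Type*} (f : M → T → M) : M × (ℕ → T) → M × (ℕ → T) :=
  fun p => (f p.1 (p.2 0), fun i => p.2 (i + 1))

/-- The support of a measure: points all of whose open neighbourhoods have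
positive measure. -/
def msupport {M : Type*} [TopologicalSpace M] [MeasurableSpace M] (μ : Measure M) : Set M :=
  {x | ∀ O : Set M, IsOpen O → x ∈ O → 0 < μ O}

/-- The ergodic basin `E(μ)` of a stationary measure: points whose time averages along
`ν^∞`-a.e. perturbed orbit converge to the space average of every continuous function. -/
def basin {M T : Type*} [TopologicalSpace M] [MeasurableSpace M] [MeasurableSpace T]
    (f : M → T → M) (νinf : Measure (ℕ → T)) (μ : Measure M) : Set M :=
  {x | ∀ᵐ t ∂νinf, ∀ φ : C(M, ℝ),
    Tendsto (fun nn : ℕ => (nn : ℝ)⁻¹ * ∑ j ∈ Finset.range nn, φ (pIter f j x t))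
      atTop (𝓝 (∫ z, φ z ∂μ))}

section

variable {M T : Type*}

section pIter

variable {f : M → T → M}

lemma pIter_congr {l : ℕ} {z : M} {t s : ℕ → T} (h : ∀ i < l, t i = s i) :
    pIter f l z t = pIter f l z s := by
  induction l with
  | zero => rfl
  | succ l ih => simp only [pIter, ih fun i hi => h i (by omega), h l l.lt_succ_self]

lemma pIter_pIter (k l : ℕ) (z : M) (t t' : ℕ → T) :
    pIter f k (pIter f l z t) t' =
      pIter f (l + k) z fun i => if i < l then t i else t' (i - l) := by
  induction k with
  | zero => exact (pIter_congr fun i hi => (if_pos hi).symm :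
      pIter f l z t = pIter f l z fun i => if i < l then t i else t' (i - l))
  | succ k ih => simp [pIter, ih]

lemma continuous_pIter [TopologicalSpace M] [TopologicalSpace T]
    (hfc : Continuous fun p : M × T => f p.1 p.2) (k : ℕ) (t : ℕ → T) :
    Continuous fun z => pIter f k z t := by
  induction k with
  | zero => exact continuous_id
  | succ k ih => exact hfc.comp (ih.prodMk continuous_const)

lemma isOpenMap_pIter [TopologicalSpace M] (hfh : ∀ t : T, IsHomeomorph fun z : M => f z t)
    (k : ℕ) (t : ℕ → T) : IsOpenMap fun z => pIter f k z t := by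
  induction k with
  | zero => exact IsOpenMap.id
  | succ k ih => exact (hfh (t k)).isOpenMap.comp ih

end pIter

namespace SInvDomain

variable [TopologicalSpace M] {f : M → T → M}

def Umod (D : SInvDomain f) (k : ℕ) : Set M := D.U ⟨k % D.r, Nat.mod_lt _ D.r_pos⟩

variable (D : SInvDomain f)

lemma Umod_congr {a b : ℕ} (h : a ≡ b [MOD D.r]) : D.Umod a = D.Umod b :=
  congrArg D.U (Fin.ext h)

lemma Umod_val (i : Fin D.r) : D.Umod i = D.U i :=
  congrArg D.U (Fin.ext (Nat.mod_eq_of_lt i.isLt))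

lemma Umod_nonempty (k : ℕ) : (D.Umod k).Nonempty := D.nonempty _

lemma pIter_mem_Umod {k i : ℕ} (hk : 1 ≤ k) {z : M} (hz : z ∈ D.Umod i) (t : ℕ → T) :
    pIter f k z t ∈ D.Umod (i + k) := by
  have h : pIter f k z t ∈ D.Umod (i % D.r + k) := D.invariant k hk _ z hz t
  rwa [D.Umod_congr ((Nat.mod_modEq i D.r).add_right k)] at h

lemma disjoint_closure_Umod {a b : ℕ} (h : ¬ a ≡ b [MOD D.r]) :
    Disjoint (closure (D.Umod a)) (closure (D.Umod b)) :=
  disjoint_iff_inter_eq_empty.2 <| D.separated _ _ fun e => h (congrArg Fin.val e)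

lemma modEq_of_subset_Umod {S : Set M} (hS : S.Nonempty) {a b : ℕ} (ha : S ⊆ D.Umod a)
    (hb : S ⊆ D.Umod b) : a ≡ b [MOD D.r] := by
  by_contra h
  obtain ⟨x, hx⟩ := hS
  exact (D.disjoint_closure_Umod h).ne_of_mem (subset_closure (ha hx)) (subset_closure (hb hx)) rfl

lemma exists_mem_closure_Umod {z : M} (hz : z ∈ closure D.carrier) :
    ∃ i : ℕ, z ∈ closure (D.Umod i) := by
  rw [carrier, closure_iUnion_of_finite, mem_iUnion] at hz
  obtain ⟨i, hi⟩ := hz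
  exact ⟨i, by rwa [D.Umod_val]⟩

def univ [Nonempty M] (f : M → T → M) : SInvDomain f where
  r := 1
  r_pos := one_pos
  U _ := Set.univ
  isOpen _ := isOpen_univ
  nonempty _ := univ_nonempty
  separated i j h := absurd (Subsingleton.elim i j) h
  invariant _ _ _ _ _ _ := mem_univ _

end SInvDomain

section Order

variable [TopologicalSpace M] {f : M → T → M} {D D' : SInvDomain f}

lemma domLE_iff : DomLE D D' ↔ ∃ c, ∀ k, D.Umod k ⊆ D'.Umod (k + c) := by
  constructor
  · rintro ⟨i, i', h⟩
    -- shift `k` by a multiple of `D.r` large enough to absorb the offset `i`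
    have hi : i < D.r * (i + 1) :=
      Nat.lt_of_lt_of_le i.lt_succ_self (Nat.le_mul_of_pos_left _ D.r_pos)
    refine ⟨i' + D.r * (i + 1) - i, fun k => ?_⟩
    calc D.Umod k = D.Umod (i + (k + D.r * (i + 1) - i)) := by
          refine D.Umod_congr ?_
          rw [show i + (k + D.r * (i + 1) - i) = k + D.r * (i + 1) by omega]
          exact (Nat.add_mul_mod_self_left k D.r (i + 1)).symm
      _ ⊆ D'.Umod (i' + (k + D.r * (i + 1) - i)) := h _ (by omega)
      _ = D'.Umod (k + (i' + D.r * (i + 1) - i)) := by congr 1; omega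
  · rintro ⟨c, h⟩
    refine ⟨0, c, fun k _ => ?_⟩
    show D.Umod (0 + k) ⊆ D'.Umod (c + k)
    rw [zero_add, add_comm]
    exact h k

lemma cyclicEq_of_forall_eq {c : ℕ} (h : ∀ k, D.Umod k = D'.Umod (k + c)) : CyclicEq D D' := by
  refine ⟨0, c, fun k _ => ?_⟩
  show D.Umod (0 + k) = D'.Umod (c + k)
  rw [zero_add, add_comm]
  exact h k

lemma domLE_refl (D : SInvDomain f) : DomLE D D := ⟨0, 0, fun _ _ => subset_rfl⟩

lemma domLE_trans {D'' : SInvDomain f} (h : DomLE D D') (h' : DomLE D' D'') : DomLE D D'' := by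
  obtain ⟨c, hc⟩ := domLE_iff.1 h
  obtain ⟨c', hc'⟩ := domLE_iff.1 h'
  exact domLE_iff.2 ⟨c + c', fun k => (hc k).trans ((hc' _).trans_eq (by rw [add_assoc]))⟩

instance : Preorder (SInvDomain f) where
  le := DomLE
  le_refl := domLE_refl
  le_trans _ _ _ := domLE_trans

lemma SInvDomain.r_dvd_r_of_le (h : D ≤ D') : D'.r ∣ D.r := by
  obtain ⟨c, hc⟩ := domLE_iff.1 h
  have h0 : D.Umod 0 ⊆ D'.Umod c := (hc 0).trans_eq (by rw [zero_add])
  have hr : D.Umod 0 ⊆ D'.Umod (D.r + c) := by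
    rw [D.Umod_congr (Nat.modEq_zero_iff_dvd.2 dvd_rfl).symm]
    exact hc D.r
  have hmod : 0 + c ≡ D.r + c [MOD D'.r] := by
    rw [zero_add]
    exact D'.modEq_of_subset_Umod (D.Umod_nonempty 0) h0 hr
  exact Nat.modEq_zero_iff_dvd.1 (Nat.ModEq.add_right_cancel' c hmod).symm

lemma cyclicEq_of_le_of_le (h : D ≤ D') (h' : D' ≤ D) : CyclicEq D D' := by
  obtain ⟨c, hc⟩ := domLE_iff.1 h
  obtain ⟨c', hc'⟩ := domLE_iff.1 h'
  refine cyclicEq_of_forall_eq (c := c) fun k => (hc k).antisymm ?_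
  have hper : D.Umod (k + c + c') = D.Umod k :=
    D.Umod_congr (D.modEq_of_subset_Umod (D.Umod_nonempty k) ((hc k).trans (hc' _)) subset_rfl)
  exact (hc' (k + c)).trans hper.subset

lemma SInvDomain.carrier_mono (h : D ≤ D') : D.carrier ⊆ D'.carrier := by
  obtain ⟨c, hc⟩ := domLE_iff.1 h
  exact iUnion_subset fun i => by
    rw [← D.Umod_val]
    exact (hc i).trans (subset_iUnion D'.U _)

lemma exists_mem_closure_carrier_of_isChain [CompactSpace M] {c : Set (SInvDomain f)}
    (hc : IsChain (· ≤ ·) c) (hne : c.Nonempty) : ∃ z, ∀ X ∈ c, z ∈ closure X.carrier := by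
  have : Nonempty c := hne.to_subtype
  obtain ⟨z, hz⟩ := IsCompact.nonempty_iInter_of_directed_nonempty_isCompact_isClosed
    (fun X : c => closure X.1.carrier)
    (fun X Y => (hc.total X.2 Y.2).elim
      (fun h => ⟨X, subset_rfl, closure_mono (SInvDomain.carrier_mono h)⟩)
      (fun h => ⟨Y, closure_mono (SInvDomain.carrier_mono h), subset_rfl⟩))
    (fun X => ((X.1.nonempty ⟨0, X.1.r_pos⟩).mono (subset_iUnion _ _)).closure)
    (fun _ => isClosed_closure.isCompact) (fun _ => isClosed_closure)
  exact ⟨z, fun X hX => mem_iInter.1 hz ⟨X, hX⟩⟩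

end Order

section Orbit

def orbitSet (f : M → T → M) (r : ℕ) (B : Set M) (ρ : ℕ) : Set M :=
  ⋃ (l : ℕ) (_ : l ≡ ρ [MOD r]) (t : ℕ → T), (fun z => pIter f l z t) '' B

variable {f : M → T → M} {r : ℕ} {B : Set M}

lemma orbitSet_nonempty [Nonempty T] (hB : B.Nonempty) (ρ : ℕ) :
    (orbitSet f r B ρ).Nonempty := by
  obtain ⟨z, hz⟩ := hB
  exact ⟨_, mem_iUnion₂.2 ⟨ρ, Nat.ModEq.refl ρ, mem_iUnion.2 ⟨Classical.arbitrary _,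
    mem_image_of_mem _ hz⟩⟩⟩

lemma orbitSet_congr {ρ ρ' : ℕ} (h : ρ ≡ ρ' [MOD r]) : orbitSet f r B ρ = orbitSet f r B ρ' := by
  have hl : ∀ l, l ≡ ρ [MOD r] ↔ l ≡ ρ' [MOD r] := fun l => ⟨(·.trans h), (·.trans h.symm)⟩
  simp only [orbitSet, hl]

lemma pIter_mem_orbitSet {ρ : ℕ} {z : M} (hz : z ∈ orbitSet f r B ρ) (k : ℕ) (t' : ℕ → T) :
    pIter f k z t' ∈ orbitSet f r B (ρ + k) := by
  simp only [orbitSet, mem_iUnion, mem_image] at hz ⊢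
  obtain ⟨l, hl, t, v, hv, rfl⟩ := hz
  exact ⟨l + k, hl.add_right k, _, v, hv, (pIter_pIter k l v t t').symm⟩

variable [TopologicalSpace M]

lemma isOpen_orbitSet (hfh : ∀ t : T, IsHomeomorph fun z : M => f z t) (hB : IsOpen B)
    (ρ : ℕ) : IsOpen (orbitSet f r B ρ) :=
  isOpen_iUnion fun l => isOpen_iUnion fun _ => isOpen_iUnion fun t =>
    isOpenMap_pIter hfh l t B hB

lemma orbitSet_subset_Umod (E : SInvDomain f) (hr : E.r ∣ r) {j : ℕ} (hB : B ⊆ E.Umod j)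
    (ρ : ℕ) : orbitSet f r B ρ ⊆ E.Umod (j + ρ) := by
  intro w hw
  simp only [orbitSet, mem_iUnion, mem_image] at hw
  obtain ⟨l, hl, t, v, hv, rfl⟩ := hw
  rw [← E.Umod_congr ((hl.of_dvd hr).add_left j)]
  rcases Nat.eq_zero_or_pos l with rfl | hl0
  · exact hB hv
  · exact E.pIter_mem_Umod hl0 (hB hv) t

def orbitDomain [Nonempty T] (hfh : ∀ t : T, IsHomeomorph fun z : M => f z t)
    (D : SInvDomain f) (hB : IsOpen B) (hBne : B.Nonempty) {j : ℕ} (hBD : B ⊆ D.Umod j) :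
    SInvDomain f where
  r := D.r
  r_pos := D.r_pos
  U ρ := orbitSet f D.r B ρ
  isOpen ρ := isOpen_orbitSet hfh hB ρ
  nonempty ρ := orbitSet_nonempty hBne ρ
  separated ρ ρ' hne := by
    have hmod : ¬ j + ρ ≡ j + ρ' [MOD D.r] := fun h =>
      hne (Fin.ext ((Nat.ModEq.add_left_cancel' j h).eq_of_lt_of_lt ρ.isLt ρ'.isLt))
    exact disjoint_iff_inter_eq_empty.1 <| (D.disjoint_closure_Umod hmod).mono
      (closure_mono (orbitSet_subset_Umod D dvd_rfl hBD ρ))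
      (closure_mono (orbitSet_subset_Umod D dvd_rfl hBD ρ'))
  invariant k _ ρ z hz t := by
    rw [orbitSet_congr (Nat.mod_modEq _ _)]
    exact pIter_mem_orbitSet hz k t

lemma orbitDomain_le [Nonempty T] (hfh : ∀ t : T, IsHomeomorph fun z : M => f z t)
    (D : SInvDomain f) (hB : IsOpen B) (hBne : B.Nonempty) {j : ℕ} (hBD : B ⊆ D.Umod j)
    (E : SInvDomain f) (hE : E.r ∣ D.r) {i : ℕ} (hi : B ⊆ E.Umod i) :
    orbitDomain hfh D hB hBne hBD ≤ E := by
  refine domLE_iff.2 ⟨i, fun k => ?_⟩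
  show orbitSet f D.r B (k % D.r) ⊆ E.Umod (k + i)
  rw [orbitSet_congr (Nat.mod_modEq k D.r), add_comm]
  exact orbitSet_subset_Umod E hE hi k

end Orbit

section HypothesisA

variable [PseudoMetricSpace M] {f : M → T → M}

/-- Hypothesis (A). -/
def PerturbedOrbitsCoverBalls (f : M → T → M) (a₀ : T) (K : ℕ) (ξ₀ : ℝ) : Prop :=
  ∀ k : ℕ, K ≤ k → ∀ x : M, ball (pIter f k x fun _ => a₀) ξ₀ ⊆ range (pIter f k x)

variable {a₀ : T} {K : ℕ} {ξ₀ : ℝ}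

lemma exists_ball_subset_Umod (hA : PerturbedOrbitsCoverBalls f a₀ K ξ₀) (E : SInvDomain f)
    (j : ℕ) : ∃ c, ball c ξ₀ ⊆ E.Umod j := by
  obtain ⟨x, hx⟩ := E.Umod_nonempty j
  have hk : K + 1 ≤ (K + 1) * E.r := Nat.le_mul_of_pos_right _ E.r_pos
  refine ⟨pIter f ((K + 1) * E.r) x fun _ => a₀, fun w hw => ?_⟩
  obtain ⟨t, rfl⟩ := hA ((K + 1) * E.r) (by omega) x hw
  have h := E.pIter_mem_Umod (k := (K + 1) * E.r) (by omega) hx t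
  rwa [E.Umod_congr (Nat.add_mul_mod_self_right j (K + 1) E.r)] at h

lemma exists_r_le [CompactSpace M] (hξ₀ : 0 < ξ₀) (hA : PerturbedOrbitsCoverBalls f a₀ K ξ₀) :
    ∃ N, ∀ E : SInvDomain f, E.r ≤ N := by
  obtain ⟨s, hs⟩ := isCompact_univ.elim_finite_subcover (fun x : M => ball x ξ₀)
    (fun _ => isOpen_ball) fun x _ => mem_iUnion.2 ⟨x, mem_ball_self hξ₀⟩
  refine ⟨s.card, fun E => ?_⟩
  choose c hc using exists_ball_subset_Umod hA E
  -- a centre of the cover near `c j` lies in the piece `j`, so distinct pieces get distinct centres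
  have hcov : ∀ j : Fin E.r, ∃ x ∈ s, x ∈ E.Umod j := fun j => by
    obtain ⟨x, hxs, hx⟩ := mem_iUnion₂.1 (hs (mem_univ (c j)))
    exact ⟨x, hxs, hc j (mem_ball_comm.1 hx)⟩
  choose x hxs hx using hcov
  have hinj : Set.InjOn x (Finset.univ : Finset (Fin E.r)) := fun j _ j' _ h =>
    Fin.ext <| (E.modEq_of_subset_Umod (singleton_nonempty (x j))
      (singleton_subset_iff.2 (hx j)) (singleton_subset_iff.2 (h ▸ hx j'))).eq_of_lt_of_lt
      j.isLt j'.isLt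
  simpa using Finset.card_le_card_of_injOn x (fun j _ => hxs j) hinj

lemma exists_r_dvd_of_isChain [CompactSpace M] (hξ₀ : 0 < ξ₀)
    (hA : PerturbedOrbitsCoverBalls f a₀ K ξ₀) {c : Set (SInvDomain f)} (hc : IsChain (· ≤ ·) c)
    (hne : c.Nonempty) : ∃ D ∈ c, ∀ X ∈ c, X.r ∣ D.r := by
  obtain ⟨N, hN⟩ := exists_r_le hξ₀ hA
  have hbdd : BddAbove (SInvDomain.r '' c) := ⟨N, by rintro _ ⟨E, -, rfl⟩; exact hN E⟩
  obtain ⟨D, hD, hDr⟩ := Nat.sSup_mem (hne.image _) hbdd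
  refine ⟨D, hD, fun X hX => (hc.total hD hX).elim SInvDomain.r_dvd_r_of_le fun h => ?_⟩
  have hle : X.r ≤ D.r := hDr ▸ le_csSup hbdd ⟨X, hX, rfl⟩
  rw [le_antisymm hle (Nat.le_of_dvd X.r_pos (SInvDomain.r_dvd_r_of_le h))]

lemma ball_subset_Umod_of_mem_closure [TopologicalSpace T]
    (hfc : Continuous fun p : M × T => f p.1 p.2) (hξ₀ : 0 < ξ₀)
    (hA : PerturbedOrbitsCoverBalls f a₀ K ξ₀) {κ : ℕ} (hκ : K ≤ κ) (hκ₁ : 1 ≤ κ)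
    (E : SInvDomain f) {i : ℕ} {z : M} (hz : z ∈ closure (E.Umod i)) :
    ball (pIter f κ z fun _ => a₀) (ξ₀ / 2) ⊆ E.Umod (i + κ) := by
  set g : M → M := fun v => pIter f κ v fun _ => a₀
  have hnhds : g ⁻¹' ball (g z) (ξ₀ / 2) ∈ 𝓝 z :=
    (continuous_pIter hfc κ _).continuousAt (ball_mem_nhds _ (half_pos hξ₀))
  obtain ⟨u, hgu, hu⟩ := mem_closure_iff_nhds.1 hz _ hnhds
  calc ball (g z) (ξ₀ / 2) ⊆ ball (g u) ξ₀ :=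
        ball_subset_ball' (by rw [dist_comm]; linarith [mem_ball.1 hgu])
    _ ⊆ range (pIter f κ u) := hA κ hκ u
    _ ⊆ E.Umod (i + κ) := range_subset_iff.2 fun t => E.pIter_mem_Umod hκ₁ hu t

end HypothesisA

section Zorn

variable [PseudoMetricSpace M] [CompactSpace M] [TopologicalSpace T] {f : M → T → M}
  {a₀ : T} {K : ℕ} {ξ₀ : ℝ}

lemma exists_le_of_isChain (hfc : Continuous fun p : M × T => f p.1 p.2)
    (hfh : ∀ t : T, IsHomeomorph fun z : M => f z t) (hξ₀ : 0 < ξ₀)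
    (hA : PerturbedOrbitsCoverBalls f a₀ K ξ₀) {c : Set (SInvDomain f)}
    (hc : IsChain (· ≤ ·) c) (hne : c.Nonempty) : ∃ L, ∀ X ∈ c, L ≤ X := by
  have : Nonempty T := ⟨a₀⟩
  obtain ⟨D, hD, hdvd⟩ := exists_r_dvd_of_isChain hξ₀ hA hc hne
  obtain ⟨z, hz⟩ := exists_mem_closure_carrier_of_isChain hc hne
  have hB : ∀ X ∈ c, ∃ i, ball (pIter f (K + 1) z fun _ => a₀) (ξ₀ / 2) ⊆ X.Umod i :=
    fun X hX => by
      obtain ⟨i, hi⟩ := X.exists_mem_closure_Umod (hz X hX)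
      exact ⟨_, ball_subset_Umod_of_mem_closure hfc hξ₀ hA K.le_succ K.succ_pos X hi⟩
  obtain ⟨j, hj⟩ := hB D hD
  refine ⟨orbitDomain hfh D isOpen_ball (nonempty_ball.2 (half_pos hξ₀)) hj, fun X hX => ?_⟩
  obtain ⟨i, hi⟩ := hB X hX
  exact orbitDomain_le hfh D _ _ hj X (hdvd X hX) hi

lemma exists_minimalDom_le (hfc : Continuous fun p : M × T => f p.1 p.2)
    (hfh : ∀ t : T, IsHomeomorph fun z : M => f z t) (hξ₀ : 0 < ξ₀)
    (hA : PerturbedOrbitsCoverBalls f a₀ K ξ₀) (D : SInvDomain f) :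
    ∃ ℳ : SInvDomain f, MinimalDom ℳ ∧ ℳ ≤ D := by
  obtain ⟨ℳ, hℳD, -, hℳ⟩ := zorn_le_nonempty₀ (α := (SInvDomain f)ᵒᵈ) univ
    (fun c _ hc y hy =>
      let ⟨L, hL⟩ := exists_le_of_isChain hfc hfh hξ₀ hA hc.symm ⟨y, hy⟩
      ⟨OrderDual.toDual L, trivial, hL⟩)
    (OrderDual.toDual D) trivial
  exact ⟨OrderDual.ofDual ℳ, fun D' hD' => cyclicEq_of_le_of_le hD' (hℳ trivial hD'), hℳD⟩

end Zorn

end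

theorem statement8_general
    (n : ℕ) (a : EuclideanSpace ℝ (Fin n)) (ε : ℝ)
    (a₀ : PSpace n a ε)
    (M : Type*) [MetricSpace M] [CompactSpace M] [MeasurableSpace M]
    (m : Measure M) (hmprob : IsProbabilityMeasure m)
    (f : M → PSpace n a ε → M)
    (hfc : Continuous fun p : M × PSpace n a ε => f p.1 p.2)
    (hfh : ∀ t : PSpace n a ε, IsHomeomorph fun z : M => f z t)
    (K : ℕ) (ξ₀ : ℝ) (hξ₀ : 0 < ξ₀)
    (hypA : ∀ k : ℕ, K ≤ k → ∀ x : M,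
      Metric.ball (pIter f k x fun _ => a₀) ξ₀ ⊆ Set.range (pIter f k x))
    : (∃ ℳ : SInvDomain f, MinimalDom ℳ) ∧
      ∀ D : SInvDomain f, ∃ ℳ : SInvDomain f, MinimalDom ℳ ∧ DomLE ℳ D := by
  have hmin := exists_minimalDom_le (a₀ := a₀) hfc hfh hξ₀ hypA
  have : Nonempty M := nonempty_of_isProbabilityMeasure m
  obtain ⟨ℳ, hℳ, -⟩ := hmin (SInvDomain.univ f)
  exact ⟨⟨ℳ, hℳ⟩, hmin⟩

/-- Under hypothesis (A), minimal domains exist and every s-invariant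
domain contains a minimal one. -/
theorem statement8
    (n : ℕ) (hn : 1 ≤ n) (a : EuclideanSpace ℝ (Fin n)) (ε : ℝ) (hε : 0 < ε)
    (a₀ : PSpace n a ε) (ha₀ : (a₀ : EuclideanSpace ℝ (Fin n)) = a)
    (ν : Measure (PSpace n a ε))
    (hν : ν = (volume (Metric.closedBall a ε))⁻¹ •
      ((volume : Measure (EuclideanSpace ℝ (Fin n))).comap Subtype.val))
    (νinf : Measure (ℕ → PSpace n a ε)) (hprobν : IsProbabilityMeasure νinf)
    (hνinf : ∀ k : ℕ, νinf.map (fun t (i : Fin k) => t i) = Measure.pi fun _ => ν)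
    (M : Type*) [MetricSpace M] [CompactSpace M] [MeasurableSpace M] [BorelSpace M]
    (m : Measure M) (hmprob : IsProbabilityMeasure m)
    (hmpos : ∀ O : Set M, IsOpen O → O.Nonempty → 0 < m O)
    (f : M → PSpace n a ε → M)
    (hfc : Continuous fun p : M × PSpace n a ε => f p.1 p.2)
    (hfh : ∀ t : PSpace n a ε, IsHomeomorph fun z : M => f z t)
    (hfnull : ∀ (t : PSpace n a ε) (A : Set M), m A = 0 →
      m ((fun z => f z t) '' A) = 0 ∧ m ((fun z => f z t) ⁻¹' A) = 0)
    (K : ℕ) (ξ₀ : ℝ) (hξ₀ : 0 < ξ₀)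
    (hypA : ∀ k : ℕ, K ≤ k → ∀ x : M,
      Metric.ball (pIter f k x fun _ => a₀) ξ₀ ⊆ Set.range (pIter f k x))
    : (∃ ℳ : SInvDomain f, MinimalDom ℳ) ∧
      ∀ D : SInvDomain f, ∃ ℳ : SInvDomain f, MinimalDom ℳ ∧ DomLE ℳ D :=
  statement8_general n a ε a₀ M m hmprob f hfc hfh K ξ₀ hξ₀ hypA

end
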